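/- Let P have a log-concave density f = e^{φ} supported in [0,∞) with mean μ₀ = ∫ x dP(x), and let \tilde P be the exponential distribution with the same mean μ₀. If φ is not identical to the log-density of \tilde P, then there exist 0 < a < b < ∞ such that φ < \tildeφ on [0,∞)∖[a,b] and φ > \tildeφ on (a,b), where \tildeφ(x) = −x/μ₀ − log μ₀ for x ≥ 0. -/

import Mathlib

open MeasureTheory Set Filter Topology

set_option maxHeartbeats 1000000

noncomputable def expE (e : EReal) : ℝ := if e = ⊥ then 0 else Real.exp e.toReal

lemma expE_coe (r : ℝ) : expE (r : EReal) = Real.exp r := by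
  simp [expE]

lemma expE_bot : expE ⊥ = 0 := if_pos rfl

lemma expE_nonneg (e : EReal) : 0 ≤ expE e := by
  unfold expE; split
  · exact le_refl 0
  · positivity

lemma expE_lt_exp_iff {e : EReal} (he : e ≠ ⊤) {r : ℝ} :
    expE e < Real.exp r ↔ e < (r : EReal) := by
  induction e using EReal.rec with
  | bot => simp [expE_bot, Real.exp_pos]
  | coe s => rw [expE_coe]; simp [Real.exp_lt_exp, EReal.coe_lt_coe_iff]
  | top => exact absurd rfl he

lemma exp_lt_expE_iff {e : EReal} (he : e ≠ ⊤) {r : ℝ} :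
    Real.exp r < expE e ↔ (r : EReal) < e := by
  induction e using EReal.rec with
  | bot => simp [expE_bot, (Real.exp_pos r).le, not_lt.2 (Real.exp_pos r).le]
  | coe s => rw [expE_coe]; simp [Real.exp_lt_exp, EReal.coe_lt_coe_iff]
  | top => exact absurd rfl he

lemma expE_eq_exp {e : EReal} (he : e ≠ ⊤) {r : ℝ} (h : expE e = Real.exp r) :
    e = (r : EReal) := by
  induction e using EReal.rec with
  | bot => exact absurd h.symm (ne_of_gt (by rw [expE_bot]; exact Real.exp_pos r))
  | coe s => rw [expE_coe] at h
             exact EReal.coe_eq_coe_iff.2 (Real.exp_injective h)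
  | top => exact absurd rfl he

lemma lc_transfer (φ : ℝ → EReal) (hφ_top : ∀ x, φ x ≠ ⊤)
    (hφ_concave : ∀ x y t : ℝ, 0 ≤ t → t ≤ 1 →
      (t : EReal) * φ x + ((1 - t : ℝ) : EReal) * φ y ≤ φ (t * x + (1 - t) * y))
    (f : ℝ → ℝ) (hf : ∀ x, f x = expE (φ x)) :
    ∀ x y t : ℝ, 0 ≤ t → t ≤ 1 →
      f x ^ t * f y ^ (1 - t) ≤ f (t * x + (1 - t) * y) := by
  intro x y t ht0 ht1
  rcases eq_or_lt_of_le ht0 with h0 | h0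
  · rw [← h0]; norm_num
  rcases eq_or_lt_of_le ht1 with h1 | h1
  · rw [h1]; simp [Real.rpow_one, Real.rpow_zero]
  -- now 0 < t < 1
  by_cases hbx : φ x = ⊥
  · have : f x = 0 := by rw [hf, hbx, expE_bot]
    rw [this, Real.zero_rpow h0.ne']
    simpa using (by rw [hf]; exact expE_nonneg _ : 0 ≤ f (t * x + (1 - t) * y))
  by_cases hby : φ y = ⊥
  · have : f y = 0 := by rw [hf, hby, expE_bot]
    rw [this, Real.zero_rpow (by linarith : (1 : ℝ) - t ≠ 0)]
    simpa using (by rw [hf]; exact expE_nonneg _ : 0 ≤ f (t * x + (1 - t) * y))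
  -- both finite
  obtain ⟨rx, hrx⟩ : ∃ r : ℝ, φ x = (r : EReal) := ⟨(φ x).toReal, (EReal.coe_toReal (hφ_top x) hbx).symm⟩
  obtain ⟨ry, hry⟩ : ∃ r : ℝ, φ y = (r : EReal) := ⟨(φ y).toReal, (EReal.coe_toReal (hφ_top y) hby).symm⟩
  have hcon := hφ_concave x y t ht0 ht1
  rw [hrx, hry] at hcon
  have hcoe : ((t * rx + (1 - t) * ry : ℝ) : EReal) ≤ φ (t * x + (1 - t) * y) := by
    refine le_trans (le_of_eq ?_) hcon
    push_cast
    ring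
  set z := t * x + (1 - t) * y
  have hbz : φ z ≠ ⊥ := fun h => by
    rw [h, le_bot_iff] at hcoe
    exact EReal.coe_ne_bot _ hcoe
  obtain ⟨rz, hrz⟩ : ∃ r : ℝ, φ z = (r : EReal) := ⟨(φ z).toReal, (EReal.coe_toReal (hφ_top z) hbz).symm⟩
  rw [hrz] at hcoe
  have hreal : t * rx + (1 - t) * ry ≤ rz := by exact_mod_cast hcoe
  rw [hf x, hf y, hf z, hrx, hry, hrz, expE_coe, expE_coe, expE_coe,
    ← Real.exp_mul, ← Real.exp_mul, ← Real.exp_add]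
  exact Real.exp_le_exp.2 (by linarith [hreal])

-- existence of point with f > 0
lemma exists_pos (f : ℝ → ℝ) (hf0 : ∀ x, 0 ≤ f x) (h1 : ∫ x, f x = 1) : ∃ x0, 0 < f x0 := by
  by_contra h
  push_neg at h
  have : f = 0 := funext fun x => le_antisymm (h x) (hf0 x)
  rw [this] at h1
  simp at h1

-- existence of strictly smaller value to the right
lemma exists_lt (f : ℝ → ℝ) (hf0 : ∀ x, 0 ≤ f x) (hfi : Integrable f) (h1 : ∫ x, f x = 1)
    (x0 : ℝ) (hx0 : 0 < f x0) : ∃ x1, x0 < x1 ∧ f x1 < f x0 := by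
  by_contra h
  push_neg at h
  set n : ℝ := 2 / f x0 with hn
  have hnpos : 0 < n := by positivity
  have hmono : ∫ x in Ioc x0 (x0 + n), f x0 ≤ ∫ x in Ioc x0 (x0 + n), f x := by
    apply setIntegral_mono_on
    · exact integrableOn_const (by rw [Real.volume_Ioc]; exact ENNReal.ofReal_ne_top)
    · exact hfi.integrableOn
    · exact measurableSet_Ioc
    · intro x hx
      exact h x hx.1
  have hconst : ∫ x in Ioc x0 (x0 + n), f x0 = n * f x0 := by
    rw [setIntegral_const, measureReal_def, Real.volume_Ioc, smul_eq_mul,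
      ENNReal.toReal_ofReal (by linarith : (0:ℝ) ≤ x0 + n - x0)]
    ring
  have hle : ∫ x in Ioc x0 (x0 + n), f x ≤ ∫ x, f x :=
    setIntegral_le_integral hfi (Filter.Eventually.of_forall hf0)
  rw [h1] at hle
  rw [hconst] at hmono
  have : n * f x0 = 2 := by rw [hn]; field_simp [hx0.ne']
  linarith

lemma exists_decay (f : ℝ → ℝ) (hf0 : ∀ x, 0 ≤ f x)
    (hlc : ∀ x y t : ℝ, 0 ≤ t → t ≤ 1 →
      f x ^ t * f y ^ (1 - t) ≤ f (t * x + (1 - t) * y))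
    (x0 x1 : ℝ) (hx01 : x0 < x1) (hfx0 : 0 < f x0) (hfx1 : f x1 < f x0) :
    ∃ x2 C c : ℝ, x1 ≤ x2 ∧ 0 < c ∧ 0 ≤ C ∧ ∀ x, x2 ≤ x → f x ≤ C * Real.exp (-c * x) := by
  have key : ∀ x, x1 < x → f x ^ ((x1 - x0) / (x - x0)) * f x0 ^ (1 - (x1 - x0) / (x - x0)) ≤ f x1 := by
    intro x hx
    have h1 : (0:ℝ) < x - x0 := by linarith
    have ht0 : 0 ≤ (x1 - x0) / (x - x0) := div_nonneg (by linarith) h1.le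
    have ht1 : (x1 - x0) / (x - x0) ≤ 1 := by
      rw [div_le_one h1]; linarith
    have := hlc x x0 _ ht0 ht1
    have harg : (x1 - x0) / (x - x0) * x + (1 - (x1 - x0) / (x - x0)) * x0 = x1 := by
      field_simp
      ring
    rwa [harg] at this
  by_cases hz : f x1 = 0
  · refine ⟨x1 + 1, 0, 1, by linarith, one_pos, le_refl 0, fun x hx => ?_⟩
    have hxgt : x1 < x := by linarith
    have hk := key x hxgt
    rw [hz] at hk
    have h1 : (0:ℝ) < x - x0 := by linarith
    have htpos : 0 < (x1 - x0) / (x - x0) := div_pos (by linarith) h1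
    have hfx : f x = 0 := by
      by_contra hne
      have hfxpos : 0 < f x := lt_of_le_of_ne (hf0 x) (Ne.symm hne)
      have : 0 < f x ^ ((x1 - x0) / (x - x0)) * f x0 ^ (1 - (x1 - x0) / (x - x0)) :=
        mul_pos (Real.rpow_pos_of_pos hfxpos _) (Real.rpow_pos_of_pos hfx0 _)
      linarith
    rw [hfx]; positivity
  · have hfx1pos : 0 < f x1 := lt_of_le_of_ne (hf0 x1) (Ne.symm hz)
    have hne10 : x1 - x0 ≠ 0 := by linarith
    set A := Real.log (f x0) with hA
    set B := Real.log (f x1) with hB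
    have hBA : B < A := Real.log_lt_log hfx1pos hfx1
    set c := (A - B) / (x1 - x0) with hc
    have hcpos : 0 < c := div_pos (by linarith) (by linarith)
    have hcx : c * (x1 - x0) = A - B := by
      rw [hc]; field_simp
    have hexpand : ∀ x : ℝ, f x0 * Real.exp (c * x0) * Real.exp (-c * x)
        = Real.exp (A + c * x0 - c * x) := by
      intro x
      rw [mul_assoc, ← Real.exp_add, hA]
      rw [← Real.exp_log hfx0]
      rw [← Real.exp_add]
      exact congrArg Real.exp (by rw [Real.log_exp]; ring)
    refine ⟨x1, f x0 * Real.exp (c * x0), c, le_refl x1, hcpos, by positivity, fun x hx => ?_⟩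
    rcases eq_or_lt_of_le hx with heq | hlt
    · rw [← heq, hexpand x1]
      have harg : A + c * x0 - c * x1 = B := by linear_combination -hcx
      rw [harg, hB, Real.exp_log hfx1pos]
    · by_cases hfx : f x = 0
      · rw [hfx]; positivity
      have hfxpos : 0 < f x := lt_of_le_of_ne (hf0 x) (Ne.symm hfx)
      set t := (x1 - x0) / (x - x0) with htd
      have h1 : (0:ℝ) < x - x0 := by linarith
      have htpos : 0 < t := div_pos (by linarith) h1
      have hk := key x hlt
      have hlog : t * Real.log (f x) + (1 - t) * A ≤ B := by
        have hlhs : Real.log (f x ^ t * f x0 ^ (1 - t)) ≤ B :=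
          Real.log_le_log (mul_pos (Real.rpow_pos_of_pos hfxpos _) (Real.rpow_pos_of_pos hfx0 _)) hk
        rwa [Real.log_mul (ne_of_gt (Real.rpow_pos_of_pos hfxpos _)) (ne_of_gt (Real.rpow_pos_of_pos hfx0 _)),
          Real.log_rpow hfxpos, Real.log_rpow hfx0] at hlhs
      have ht' : t * (x - x0) = x1 - x0 := by
        rw [htd]; field_simp
      have h2 : t * (Real.log (f x) - A) ≤ B - A := by linarith
      have h5 : (x1 - x0) * (Real.log (f x) - A) ≤ (B - A) * (x - x0) := by
        nlinarith [mul_le_mul_of_nonneg_right h2 h1.le]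
      have e1 : (A - B) * (x0 - x) = (c * (x1 - x0)) * (x0 - x) := by rw [hcx]
      have hgl2 : (x1 - x0) * Real.log (f x) ≤ (x1 - x0) * (A + c * x0 - c * x) := by
        nlinarith [h5, e1]
      have hgoal_log : Real.log (f x) ≤ A + c * x0 - c * x :=
        (mul_le_mul_iff_right₀ (by linarith : (0:ℝ) < x1 - x0)).mp hgl2
      calc f x = Real.exp (Real.log (f x)) := (Real.exp_log hfxpos).symm
        _ ≤ Real.exp (A + c * x0 - c * x) := Real.exp_le_exp.2 hgoal_log
        _ = f x0 * Real.exp (c * x0) * Real.exp (-c * x) := (hexpand x).symm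

lemma integrable_xf (f : ℝ → ℝ) (hf0 : ∀ x, 0 ≤ f x) (hfneg : ∀ x : ℝ, x < 0 → f x = 0)
    (hfi : Integrable f)
    (x2 C c : ℝ) (hcpos : 0 < c) (hC : 0 ≤ C)
    (hdecay : ∀ x, x2 ≤ x → f x ≤ C * Real.exp (-c * x)) :
    Integrable (fun x => x * f x) := by
  set x3 := max x2 1 with hx3
  have hx3pos : (0:ℝ) < x3 := lt_of_lt_of_le one_pos (le_max_right _ _)
  set C2 := 2 * C / c with hC2
  have hC2nn : 0 ≤ C2 := by positivity
  set B : ℝ → ℝ := fun x => x3 * f x + (Ici (0:ℝ)).indicator (fun x => C2 * Real.exp (-(c/2) * x)) x with hB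
  have hBint : Integrable B := by
    apply (hfi.const_mul x3).add
    have : IntegrableOn (fun x => C2 * Real.exp (-(c/2) * x)) (Ici (0:ℝ)) := by
      rw [integrableOn_Ici_iff_integrableOn_Ioi]
      exact (exp_neg_integrableOn_Ioi 0 (by positivity)).const_mul C2
    exact this.integrable_indicator measurableSet_Ici
  apply Integrable.mono' hBint
  · exact (measurable_id.aestronglyMeasurable).mul hfi.aestronglyMeasurable
  · refine Filter.Eventually.of_forall fun x => ?_
    rw [Real.norm_eq_abs]
    rcases lt_or_ge x 0 with hx | hx
    · rw [hfneg x hx]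
      simp only [mul_zero, abs_zero, hB]
      have : (Ici (0:ℝ)).indicator (fun x => C2 * Real.exp (-(c/2) * x)) x = 0 :=
        indicator_of_notMem (by simpa using hx) _
      rw [hfneg x hx, this]
      norm_num
    · have habs : |x * f x| = x * f x := abs_of_nonneg (mul_nonneg hx (hf0 x))
      rw [habs, hB]
      simp only []
      have hind : (Ici (0:ℝ)).indicator (fun x => C2 * Real.exp (-(c/2) * x)) x
          = C2 * Real.exp (-(c/2) * x) := indicator_of_mem hx _
      show x * f x ≤ x3 * f x + (Ici (0:ℝ)).indicator (fun x => C2 * Real.exp (-(c/2) * x)) x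
      rw [hind]
      rcases le_or_gt x x3 with hxle | hxgt
      · have h1 : x * f x ≤ x3 * f x := mul_le_mul_of_nonneg_right hxle (hf0 x)
        have h2 : 0 ≤ C2 * Real.exp (-(c/2) * x) := by positivity
        linarith
      · have hxx2 : x2 ≤ x := le_trans (le_max_left _ _) hxgt.le
        have hd := hdecay x hxx2
        have h1 : x * f x ≤ x * (C * Real.exp (-c * x)) :=
          mul_le_mul_of_nonneg_left hd (by linarith)
        have hxe : x ≤ (2/c) * Real.exp ((c/2) * x) := by
          have := Real.add_one_le_exp ((c/2) * x)
          have hpos : 0 < (c/2) * x := mul_pos (by positivity) (lt_trans hx3pos hxgt)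
          have : (c/2) * x ≤ Real.exp ((c/2) * x) := by linarith
          calc x = (2/c) * ((c/2) * x) := by
                field_simp
            _ ≤ (2/c) * Real.exp ((c/2) * x) := by
                apply mul_le_mul_of_nonneg_left this (by positivity)
        have h2 : x * (C * Real.exp (-c * x)) ≤ C2 * Real.exp (-(c/2) * x) := by
          have := mul_le_mul_of_nonneg_right hxe
            (mul_nonneg hC (Real.exp_nonneg (-c * x)))
          calc x * (C * Real.exp (-c * x))
              ≤ (2/c) * Real.exp ((c/2) * x) * (C * Real.exp (-c * x)) := this
            _ = (2 * C / c) * (Real.exp ((c/2) * x) * Real.exp (-c * x)) := by ring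
            _ = C2 * Real.exp (-(c/2) * x) := by
                rw [← Real.exp_add, hC2]
                congr 1
                ring_nf
        have h3 : 0 ≤ x3 * f x := mul_nonneg hx3pos.le (hf0 x)
        linarith

section expdist
variable {m : ℝ} (hm : 0 < m)

lemma gamma2_int : IntegrableOn (fun y : ℝ => y * Real.exp (-y)) (Ioi (0:ℝ)) := by
  have h := Real.GammaIntegral_convergent (by norm_num : (0:ℝ) < 2)
  refine h.congr_fun (fun x hx => ?_) measurableSet_Ioi
  beta_reduce
  rw [show (2:ℝ) - 1 = 1 by norm_num, Real.rpow_one]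
  ring

lemma gamma2_val : ∫ y in Ioi (0:ℝ), y * Real.exp (-y) = 1 := by
  have h := Real.Gamma_eq_integral (by norm_num : (0:ℝ) < 2)
  rw [Real.Gamma_two] at h
  rw [show (1:ℝ) = ∫ x in Ioi (0:ℝ), Real.exp (-x) * x ^ ((2:ℝ)-1) from h]
  refine setIntegral_congr_fun measurableSet_Ioi (fun x hx => ?_)
  rw [show (2:ℝ) - 1 = 1 by norm_num, Real.rpow_one]
  ring

include hm

lemma expdist_int1 : IntegrableOn (fun x : ℝ => Real.exp (-x/m - Real.log m)) (Ioi (0:ℝ)) := by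
  have : (fun x : ℝ => Real.exp (-x/m - Real.log m))
      = fun x => Real.exp (-Real.log m) * Real.exp (-(1/m) * x) := by
    funext x
    rw [← Real.exp_add]
    congr 1
    field_simp
    ring
  rw [this]
  exact (exp_neg_integrableOn_Ioi 0 (by positivity)).const_mul _

lemma expdist_val1 : ∫ x in Ioi (0:ℝ), Real.exp (-x/m - Real.log m) = 1 := by
  have h1 : (fun x : ℝ => Real.exp (-x/m - Real.log m))
      = fun x => Real.exp (-Real.log m) * Real.exp (-((1/m) * x)) := by
    funext x
    rw [← Real.exp_add]
    congr 1
    field_simp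
    ring
  rw [h1, MeasureTheory.integral_const_mul]
  have h2 := integral_comp_mul_left_Ioi (fun y : ℝ => Real.exp (-y)) 0 (by positivity : 0 < 1/m)
  simp only [mul_zero] at h2
  rw [h2, integral_exp_neg_Ioi]
  rw [Real.exp_neg, Real.exp_log hm, smul_eq_mul]
  field_simp
  simp

lemma expdist_int2 : IntegrableOn (fun x : ℝ => x * Real.exp (-x/m - Real.log m)) (Ioi (0:ℝ)) := by
  have base : IntegrableOn (fun x : ℝ => (1/m) * x * Real.exp (-((1/m) * x))) (Ioi (0:ℝ)) := by
    have := (integrableOn_Ioi_comp_mul_left_iff (fun y : ℝ => y * Real.exp (-y)) 0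
      (by positivity : 0 < 1/m)).2 (by simpa using gamma2_int)
    simpa using this
  have : (fun x : ℝ => x * Real.exp (-x/m - Real.log m))
      = fun x => (m * Real.exp (-Real.log m)) * ((1/m) * x * Real.exp (-((1/m) * x))) := by
    funext x
    rw [show -x/m - Real.log m = -Real.log m + -(1/m * x) by field_simp; ring, Real.exp_add]
    field_simp
  rw [this]
  exact base.const_mul _

lemma expdist_val2 : ∫ x in Ioi (0:ℝ), x * Real.exp (-x/m - Real.log m) = m := by
  have h1 : (fun x : ℝ => x * Real.exp (-x/m - Real.log m))
      = fun x => (m * Real.exp (-Real.log m)) * ((1/m) * x * Real.exp (-((1/m) * x))) := by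
    funext x
    rw [show -x/m - Real.log m = -Real.log m + -(1/m * x) by field_simp; ring, Real.exp_add]
    field_simp
  rw [h1, MeasureTheory.integral_const_mul]
  have h2 := integral_comp_mul_left_Ioi (fun y : ℝ => y * Real.exp (-y)) 0 (by positivity : 0 < 1/m)
  simp only [mul_zero] at h2
  have h3 : (fun x : ℝ => 1/m * x * Real.exp (-(1/m * x)))
      = fun x : ℝ => (fun y : ℝ => y * Real.exp (-y)) ((1/m) * x) := by
    funext x
    simp
  rw [h3, h2, gamma2_val, Real.exp_neg, Real.exp_log hm, smul_eq_mul]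
  field_simp
end expdist

lemma rigidity (φ : ℝ → EReal) (hφ_top : ∀ x, φ x ≠ ⊤)
    (hφ_concave : ∀ x y t : ℝ, 0 ≤ t → t ≤ 1 →
      (t : EReal) * φ x + ((1 - t : ℝ) : EReal) * φ y ≤ φ (t * x + (1 - t) * y))
    (hφ_usc : UpperSemicontinuous φ)
    (f : ℝ → ℝ) (hf : ∀ x, f x = expE (φ x))
    (hlc : ∀ x y t : ℝ, 0 ≤ t → t ≤ 1 →
      f x ^ t * f y ^ (1 - t) ≤ f (t * x + (1 - t) * y))
    (hf0 : ∀ x, 0 ≤ f x)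
    (m : ℝ) (hm : 0 < m)
    (hae : f =ᵐ[volume] (Ioi (0:ℝ)).indicator fun x => Real.exp (-x/m - Real.log m)) :
    ∀ x : ℝ, 0 ≤ x → φ x = ((-x / m - Real.log m : ℝ) : EReal) := by
  set L : ℝ → ℝ := fun x => -x/m - Real.log m with hL
  -- density of equality points
  have hEdense : ∀ u v : ℝ, 0 ≤ u → u < v → ∃ e, u < e ∧ e < v ∧ f e = Real.exp (L e) := by
    intro u v hu huv
    by_contra h
    push_neg at h
    have hsub : Ioo u v ⊆ {x | ¬ f x = (Ioi (0:ℝ)).indicator (fun x => Real.exp (-x/m - Real.log m)) x} := by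
      intro e he
      have he0 : e ∈ Ioi (0:ℝ) := lt_of_le_of_lt hu he.1
      rw [mem_setOf_eq, indicator_of_mem he0]
      exact h e he.1 he.2
    have h0 : volume (Ioo u v) = 0 := measure_mono_null hsub (ae_iff.1 hae)
    rw [Real.volume_Ioo] at h0
    exact absurd h0 (by simp; linarith)
  -- affine identity for L
  have hLaff : ∀ p q t : ℝ, t * L p + (1 - t) * L q = L (t * p + (1 - t) * q) := by
    intro p q t
    simp only [hL]
    ring
  have hLexp : ∀ p q t : ℝ, Real.exp (L p) ^ t * Real.exp (L q) ^ (1 - t)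
      = Real.exp (L (t * p + (1 - t) * q)) := by
    intro p q t
    rw [← Real.exp_mul, ← Real.exp_mul, ← Real.exp_add, mul_comm (L p) t, mul_comm (L q) (1-t), hLaff]
  -- pointwise equality of f on (0, ∞)
  have hfeq : ∀ y : ℝ, 0 < y → f y = Real.exp (L y) := by
    intro y hy
    obtain ⟨e1, he1u, he1v, he1⟩ := hEdense (y/2) y (by linarith) (by linarith)
    obtain ⟨e2, he2u, he2v, he2⟩ := hEdense y (y+1) hy.le (by linarith)
    have he12 : e1 < e2 := lt_trans he1v he2u
    -- lower bound
    have hlow : Real.exp (L y) ≤ f y := by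
      set t := (e2 - y)/(e2 - e1) with ht
      have h1 : (0:ℝ) < e2 - e1 := by linarith
      have ht0 : 0 ≤ t := div_nonneg (by linarith) h1.le
      have ht1 : t ≤ 1 := by rw [div_le_one h1]; linarith
      have hv' : t * e1 + (1 - t) * e2 = y := by rw [ht]; field_simp; ring
      have := hlc e1 e2 t ht0 ht1
      rw [hv', he1, he2, hLexp, hv'] at this
      exact this
    -- upper bound
    obtain ⟨d1, hd1u, hd1v, hd1⟩ := hEdense (y/2) (3*y/4) (by linarith) (by linarith)
    obtain ⟨d2, hd2u, hd2v, hd2⟩ := hEdense (3*y/4) y (by linarith) (by linarith)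
    have hd12 : d1 < d2 := lt_trans hd1v hd2u
    have hd2y : d2 < y := hd2v
    have hhigh : f y ≤ Real.exp (L y) := by
      set t := (y - d2)/(y - d1) with ht
      have h1 : (0:ℝ) < y - d1 := by linarith
      have ht0 : 0 < t := div_pos (by linarith) h1
      have ht1 : t < 1 := by rw [div_lt_one h1]; linarith
      have hv' : t * d1 + (1 - t) * y = d2 := by rw [ht]; field_simp; ring
      have hk := hlc d1 y t ht0.le ht1.le
      rw [hv', hd1, hd2] at hk
      -- f y ^ (1-t) ≤ exp (L d2) / exp (L d1) ^ t = exp(L y)^(1-t)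
      have hsplit : Real.exp (L d2) = Real.exp (L d1) ^ t * Real.exp (L y) ^ (1 - t) := by
        rw [hLexp, hv']
      rw [hsplit] at hk
      have hpos : (0:ℝ) < Real.exp (L d1) ^ t := Real.rpow_pos_of_pos (Real.exp_pos _) _
      have hk2 : f y ^ (1 - t) ≤ Real.exp (L y) ^ (1 - t) := by
        have := (mul_le_mul_iff_right₀ hpos).mp hk
        exact this
      have hexp : ∀ z : ℝ, 0 ≤ z → (z ^ (1 - t)) ^ (1/(1-t)) = z := by
        intro z hz
        rw [← Real.rpow_mul hz]
        rw [mul_one_div, div_self (by linarith : (1:ℝ) - t ≠ 0), Real.rpow_one]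
      calc f y = (f y ^ (1-t)) ^ (1/(1-t)) := (hexp _ (hf0 y)).symm
        _ ≤ (Real.exp (L y) ^ (1-t)) ^ (1/(1-t)) :=
            Real.rpow_le_rpow (Real.rpow_nonneg (hf0 y) _) hk2
              (le_of_lt (div_pos one_pos (by linarith)))
        _ = Real.exp (L y) := hexp _ (Real.exp_nonneg _)
    exact le_antisymm hhigh hlow
  -- φ = L on (0, ∞)
  have hφeq : ∀ y : ℝ, 0 < y → φ y = ((L y : ℝ) : EReal) := by
    intro y hy
    exact expE_eq_exp (hφ_top y) (by rw [← hf]; exact hfeq y hy)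
  intro x hx
  rcases lt_or_eq_of_le hx with hx | hx
  · exact hφeq x hx
  -- x = 0 case
  subst hx
  show φ 0 = ((L 0 : ℝ) : EReal)
  have hge : ((L 0 : ℝ) : EReal) ≤ φ 0 := by
    by_contra hlt
    push_neg at hlt
    obtain ⟨r, hr1, hr2⟩ := EReal.exists_between_coe_real hlt
    have hev1 : ∀ᶠ z in 𝓝 (0:ℝ), φ z < (r : EReal) := hφ_usc 0 (r : EReal) hr1
    have hr2' : r < L 0 := by exact_mod_cast hr2
    have hLcont : Continuous L := by rw [hL]; fun_prop
    have hev2 : ∀ᶠ z in 𝓝 (0:ℝ), r < L z :=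
      (hLcont.continuousAt).eventually (eventually_gt_nhds hr2')
    have hev3 : ∀ᶠ z in 𝓝[>] (0:ℝ), φ z = ((L z : ℝ) : EReal) :=
      eventually_nhdsWithin_of_forall (fun z hz => hφeq z hz)
    obtain ⟨z, hz1, hz2, hz3⟩ :=
      ((hev1.filter_mono nhdsWithin_le_nhds).and
        ((hev2.filter_mono nhdsWithin_le_nhds).and hev3)).exists
    rw [hz3] at hz1
    have : L z < r := by exact_mod_cast hz1
    linarith
  have hb0 : φ 0 ≠ ⊥ := fun h => by
    rw [h, le_bot_iff] at hge
    exact EReal.coe_ne_bot _ hge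
  obtain ⟨r0, hr0eq⟩ : ∃ r : ℝ, φ 0 = (r : EReal) :=
    ⟨(φ 0).toReal, (EReal.coe_toReal (hφ_top 0) hb0).symm⟩
  have hr0ge : L 0 ≤ r0 := by
    rw [hr0eq] at hge
    exact_mod_cast hge
  have hcon := hφ_concave 0 2 (1/2) (by norm_num) (by norm_num)
  have harg : (1/2 : ℝ) * 0 + (1 - 1/2) * 2 = 1 := by norm_num
  rw [harg, hφeq 1 one_pos, hφeq 2 (by norm_num), hr0eq] at hcon
  have hcoe : ((1/2 * r0 + (1 - 1/2) * L 2 : ℝ) : EReal) ≤ ((L 1 : ℝ) : EReal) := by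
    refine le_trans (le_of_eq ?_) hcon
    push_cast
    ring
  have hreal : 1/2 * r0 + (1 - 1/2) * L 2 ≤ L 1 := by exact_mod_cast hcoe
  have hle : r0 ≤ L 0 := by
    have hL0 : L 0 = - Real.log m := by simp [hL]
    have hL1 : L 1 = -1/m - Real.log m := by simp [hL]
    have hL2 : L 2 = -2/m - Real.log m := by simp [hL]
    rw [hL0]
    rw [hL1, hL2] at hreal
    have : -2/m = 2 * (-1/m) := by ring
    linarith [hreal, this]
  rw [hr0eq]
  exact_mod_cast le_antisymm hle hr0ge


/-- If `f = e^φ` is a log-concave probability density supported in `[0,∞)`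
with mean `μ₀`, and `φ` is not identical to the log-density
`x ↦ -x/μ₀ - log μ₀` of the exponential distribution with mean `μ₀`, then the
two log-densities cross exactly twice: `φ < φ̃` off `[a,b]` and `φ > φ̃` on
`(a,b)` for some `0 < a < b < ∞`. -/
theorem stmt_12
    (φ : ℝ → EReal) (hφ_top : ∀ x, φ x ≠ ⊤)
    (hφ_concave : ∀ x y t : ℝ, 0 ≤ t → t ≤ 1 →
      (t : EReal) * φ x + ((1 - t : ℝ) : EReal) * φ y ≤ φ (t * x + (1 - t) * y))
    (hφ_usc : UpperSemicontinuous φ)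
    (hφ_neg : ∀ x : ℝ, x < 0 → φ x = ⊥)
    (f : ℝ → ℝ) (hf : ∀ x, f x = expE (φ x)) (hf_int : ∫ x, f x = 1)
    (μ0 : ℝ) (hμ0 : μ0 = ∫ x, x * f x)
    (hne : ¬ ∀ x : ℝ, 0 ≤ x → φ x = ((-x / μ0 - Real.log μ0 : ℝ) : EReal)) :
    ∃ a b : ℝ, 0 < a ∧ a < b ∧
      (∀ x : ℝ, 0 ≤ x → x ∉ Icc a b → φ x < ((-x / μ0 - Real.log μ0 : ℝ) : EReal)) ∧
      (∀ x ∈ Ioo a b, ((-x / μ0 - Real.log μ0 : ℝ) : EReal) < φ x) := by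
  classical
  have hf0 : ∀ x, 0 ≤ f x := fun x => by rw [hf]; exact expE_nonneg _
  have hfnegz : ∀ x : ℝ, x < 0 → f x = 0 := fun x hx => by rw [hf, hφ_neg x hx, expE_bot]
  have hfi : Integrable f := by
    by_contra h
    rw [integral_undef h] at hf_int
    norm_num at hf_int
  have hlc := lc_transfer φ hφ_top hφ_concave f hf
  obtain ⟨x0, hx0⟩ := exists_pos f hf0 hf_int
  obtain ⟨x1, hx01, hx1lt⟩ := exists_lt f hf0 hfi hf_int x0 hx0
  obtain ⟨x2, C, c, hx12, hcpos, hCnn, hdecay⟩ := exists_decay f hf0 hlc x0 x1 hx01 hx0 hx1lt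
  have hxfi : Integrable (fun x => x * f x) :=
    integrable_xf f hf0 hfnegz hfi x2 C c hcpos hCnn hdecay
  -- positivity of the mean
  have hxf0 : ∀ x : ℝ, 0 ≤ x * f x := fun x => by
    rcases lt_or_ge x 0 with hx | hx
    · rw [hfnegz x hx, mul_zero]
    · exact mul_nonneg hx (hf0 x)
  have hμnn : 0 ≤ μ0 := hμ0 ▸ integral_nonneg hxf0
  have hae_ne0 : ∀ᵐ x : ℝ, x ≠ (0:ℝ) := by
    rw [ae_iff]
    have : {x : ℝ | ¬ x ≠ 0} = {0} := by ext z; simp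
    rw [this]
    exact measure_singleton 0
  have hm : 0 < μ0 := by
    rcases lt_or_eq_of_le hμnn with h | h
    · exact h
    · exfalso
      have hz : ∫ x, x * f x = 0 := by rw [← hμ0, ← h]
      have hae := (integral_eq_zero_iff_of_nonneg (fun x => hxf0 x) hxfi).1 hz
      have hfae : f =ᵐ[volume] 0 := by
        filter_upwards [hae, hae_ne0] with x hx hx0
        have : x * f x = 0 := hx
        rcases mul_eq_zero.1 this with h | h
        · exact absurd h hx0
        · exact h
      rw [integral_congr_ae hfae] at hf_int
      simp at hf_int
  -- the exponential log-density
  set L : ℝ → ℝ := fun x => -x / μ0 - Real.log μ0 with hL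
  set G : ℝ → ℝ := (Ioi (0:ℝ)).indicator (fun x => Real.exp (-x/μ0 - Real.log μ0)) with hG
  have hGneg : ∀ x : ℝ, x ≤ 0 → G x = 0 := fun x hx =>
    indicator_of_notMem (by simpa using hx) _
  have hGpos : ∀ x : ℝ, 0 < x → G x = Real.exp (L x) := fun x hx =>
    indicator_of_mem hx _
  have hGi : Integrable G := (expdist_int1 hm).integrable_indicator measurableSet_Ioi
  have hG1 : ∫ x, G x = 1 := by
    rw [hG, integral_indicator measurableSet_Ioi]
    exact expdist_val1 hm
  have hxG_eq : (fun x => x * G x) = (Ioi (0:ℝ)).indicator (fun x => x * Real.exp (-x/μ0 - Real.log μ0)) := by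
    funext x
    by_cases hx : x ∈ Ioi (0:ℝ)
    · rw [hG, indicator_of_mem hx, indicator_of_mem hx]
    · rw [hG, indicator_of_notMem hx, indicator_of_notMem hx, mul_zero]
  have hxGi : Integrable (fun x => x * G x) := by
    rw [hxG_eq]
    exact (expdist_int2 hm).integrable_indicator measurableSet_Ioi
  have hxG1 : ∫ x, x * G x = μ0 := by
    rw [hxG_eq, integral_indicator measurableSet_Ioi]
    exact expdist_val2 hm
  -- the crossing set
  set S : Set ℝ := {x | 0 < x ∧ Real.exp (L x) < f x} with hS
  have hSbb : BddBelow S := ⟨0, fun s hs => hs.1.le⟩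
  have hLexp : ∀ p q t : ℝ, Real.exp (L p) ^ t * Real.exp (L q) ^ (1 - t)
      = Real.exp (L (t * p + (1 - t) * q)) := by
    intro p q t
    rw [← Real.exp_mul, ← Real.exp_mul, ← Real.exp_add]
    congr 1
    simp only [hL]
    ring
  -- the interval/betweenness lemma
  have hS_mid : ∀ p q v : ℝ, 0 ≤ p → p < v → v < q →
      Real.exp (L p) ≤ f p → Real.exp (L q) ≤ f q →
      (Real.exp (L p) < f p ∨ Real.exp (L q) < f q) → v ∈ S := by
    intro p q v hp hpv hvq hfp hfq hstrict
    have hpq : p < q := lt_trans hpv hvq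
    have h1 : (0:ℝ) < q - p := by linarith
    set t := (q - v)/(q - p) with ht
    have ht0 : 0 < t := div_pos (by linarith) h1
    have ht1 : t < 1 := by rw [div_lt_one h1]; linarith
    have hv' : t * p + (1 - t) * q = v := by rw [ht]; field_simp; ring
    have hcomb := hlc p q t ht0.le ht1.le
    rw [hv'] at hcomb
    have hprod : Real.exp (L p) ^ t * Real.exp (L q) ^ (1 - t) < f p ^ t * f q ^ (1 - t) := by
      rcases hstrict with hs | hs
      · exact mul_lt_mul (Real.rpow_lt_rpow (Real.exp_nonneg _) hs ht0)
          (Real.rpow_le_rpow (Real.exp_nonneg _) hfq (by linarith))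
          (Real.rpow_pos_of_pos (Real.exp_pos _) _)
          (Real.rpow_nonneg (hf0 p) _)
      · exact mul_lt_mul' (Real.rpow_le_rpow (Real.exp_nonneg _) hfp ht0.le)
          (Real.rpow_lt_rpow (Real.exp_nonneg _) hs (by linarith))
          (Real.rpow_nonneg (Real.exp_nonneg _) _)
          (Real.rpow_pos_of_pos (lt_of_lt_of_le (Real.exp_pos _) hfp) _)
    have hLv : Real.exp (L p) ^ t * Real.exp (L q) ^ (1 - t) = Real.exp (L v) := by
      rw [hLexp, hv']
    refine ⟨by linarith, ?_⟩
    rw [← hLv]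
    exact lt_of_lt_of_le hprod hcomb
  -- membership from strictness on both sides
  have hmemS : ∀ x : ℝ, x ∈ S → Real.exp (L x) < f x := fun x hx => hx.2
  have hSpos : ∀ x : ℝ, x ∈ S → 0 < x := fun x hx => hx.1
  -- a.e. zero-integral tool
  have hzero : ∀ W : ℝ → ℝ, Integrable W → (∀ᵐ x, 0 ≤ W x) → (∫ x, W x) = 0 →
      ∀ u v : ℝ, u < v → (∀ x, u < x → x < v → 0 < W x) → False := by
    intro W hWi hWnn hW0 u v huv hWpos
    have hWz : W =ᵐ[volume] 0 := (integral_eq_zero_iff_of_nonneg_ae hWnn hWi).1 hW0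
    have hsub : Ioo u v ⊆ {x | ¬ W x = 0} := fun x hx => (hWpos x hx.1 hx.2).ne'
    have h0 : volume (Ioo u v) = 0 := measure_mono_null hsub (ae_iff.1 hWz)
    rw [Real.volume_Ioo] at h0
    exact absurd h0 (by simp; linarith)
  -- rigidity consequence
  have hrig : f =ᵐ[volume] G → False := by
    intro hae
    exact hne (rigidity φ hφ_top hφ_concave hφ_usc f hf hlc hf0 μ0 hm hae)
  -- nonemptiness of S
  have hS_ne : S.Nonempty := by
    by_contra hS0
    rw [not_nonempty_iff_eq_empty] at hS0
    have hDnn : ∀ᵐ x : ℝ, 0 ≤ G x - f x := by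
      filter_upwards [hae_ne0] with x hx
      rcases lt_or_ge x 0 with h | h
      · rw [hfnegz x h, hGneg x h.le]; norm_num
      · have hxpos : 0 < x := lt_of_le_of_ne h (Ne.symm hx)
        have hnotS : x ∉ S := by rw [hS0]; exact notMem_empty x
        have : ¬ Real.exp (L x) < f x := fun hc => hnotS ⟨hxpos, hc⟩
        rw [hGpos x hxpos]
        linarith [not_lt.1 this]
    have hDi : Integrable (fun x => G x - f x) := hGi.sub hfi
    have hD0 : ∫ x, G x - f x = 0 := by
      rw [integral_sub hGi hfi, hG1, hf_int]
      ring
    have hDz := (integral_eq_zero_iff_of_nonneg_ae hDnn hDi).1 hD0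
    apply hrig
    filter_upwards [hDz] with x hx
    have : G x - f x = 0 := hx
    linarith
  have hS_ne' := hS_ne
  obtain ⟨s₀, hs₀⟩ := hS_ne'
  -- S is bounded above
  have hSba : BddAbove S := by
    by_contra hun
    rw [not_bddAbove_iff] at hun
    set a0 := sInf S with ha0
    have hIoi : ∀ x, a0 < x → x ∈ S := by
      intro x hx
      obtain ⟨s1, hs1S, hs1x⟩ := exists_lt_of_csInf_lt hS_ne hx
      obtain ⟨s2, hs2S, hs2x⟩ := hun x
      exact hS_mid s1 s2 x (hSpos s1 hs1S).le hs1x hs2x (hmemS s1 hs1S).le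
        (hmemS s2 hs2S).le (Or.inl (hmemS s1 hs1S))
    set W : ℝ → ℝ := fun x => (x - a0) * (f x - G x) with hW
    have hWeq : W = fun x => (x * f x - x * G x) - a0 * (f x - G x) := by
      funext x; rw [hW]; ring
    have hI1 : Integrable (fun x => x * f x - x * G x) := hxfi.sub hxGi
    have hI2 : Integrable (fun x => a0 * (f x - G x)) := (hfi.sub hGi).const_mul a0
    have hWi : Integrable W := by
      have : W = fun x => (x * f x - x * G x) - a0 * (f x - G x) := hWeq
      rw [this]
      exact hI1.sub hI2
    have hW0 : ∫ x, W x = 0 := by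
      have e1 : ∫ x, W x = ∫ x, ((x * f x - x * G x) - a0 * (f x - G x)) :=
        integral_congr_ae (.of_forall fun x => by simp only [hW]; ring)
      rw [e1, integral_sub hI1 hI2, integral_sub hxfi hxGi, MeasureTheory.integral_const_mul,
        integral_sub hfi hGi, ← hμ0, hxG1, hf_int, hG1]
      ring
    have hWnn : ∀ᵐ x : ℝ, 0 ≤ W x := by
      filter_upwards [hae_ne0] with x hx
      show 0 ≤ (x - a0) * (f x - G x)
      rcases lt_or_ge x 0 with h | h
      · rw [hfnegz x h, hGneg x h.le]
        norm_num
      · have hxpos : 0 < x := lt_of_le_of_ne h (Ne.symm hx)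
        rcases lt_trichotomy x a0 with hlt | heq | hgt
        · have hnotS : x ∉ S := fun hmem => absurd (csInf_le hSbb hmem) (not_le.2 hlt)
          have hfle : f x ≤ G x := by
            have : ¬ Real.exp (L x) < f x := fun hc => hnotS ⟨hxpos, hc⟩
            rw [hGpos x hxpos]
            linarith [not_lt.1 this]
          nlinarith [mul_nonneg (by linarith : (0:ℝ) ≤ a0 - x) (by linarith : (0:ℝ) ≤ G x - f x)]
        · rw [heq]; simp
        · have hmem := hIoi x hgt
          have : G x < f x := by rw [hGpos x hxpos]; exact hmemS x hmem
          exact (mul_pos (by linarith) (by linarith)).le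
    refine hzero W hWi hWnn hW0 a0 (a0 + 1) (by linarith) ?_
    intro x hx1 hx2
    have hmem := hIoi x hx1
    have hxpos := hSpos x hmem
    have : G x < f x := by rw [hGpos x hxpos]; exact hmemS x hmem
    show 0 < (x - a0) * (f x - G x)
    exact mul_pos (by linarith) (by linarith)
  set a := sInf S with ha
  set b := sSup S with hb
  have haS : ∀ s ∈ S, a ≤ s := fun s hs => csInf_le hSbb hs
  have hbS : ∀ s ∈ S, s ≤ b := fun s hs => le_csSup hSba hs
  have hann : 0 ≤ a := le_csInf hS_ne (fun s hs => (hSpos s hs).le)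
  have hbpos : 0 < b := lt_of_lt_of_le (hSpos s₀ hs₀) (hbS s₀ hs₀)
  -- all of (a, b) is in S
  have hIooS : ∀ x, a < x → x < b → x ∈ S := by
    intro x hx1 hx2
    obtain ⟨s1, hs1S, hs1x⟩ := exists_lt_of_csInf_lt hS_ne hx1
    obtain ⟨s2, hs2S, hs2x⟩ := exists_lt_of_lt_csSup hS_ne hx2
    exact hS_mid s1 s2 x (hSpos s1 hs1S).le hs1x hs2x (hmemS s1 hs1S).le
      (hmemS s2 hs2S).le (Or.inl (hmemS s1 hs1S))
  -- a is positive
  have hapos : 0 < a := by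
    rcases lt_or_eq_of_le hann with h | h
    · exact h
    · exfalso
      have ha0 : a = 0 := h.symm
      set W : ℝ → ℝ := fun x => (b - x) * (f x - G x) with hW
      have hWeq : W = fun x => b * (f x - G x) - (x * f x - x * G x) := by
        funext x; rw [hW]; ring
      have hI1 : Integrable (fun x => b * (f x - G x)) := (hfi.sub hGi).const_mul b
      have hI2 : Integrable (fun x => x * f x - x * G x) := hxfi.sub hxGi
      have hWi : Integrable W := by
        have : W = fun x => b * (f x - G x) - (x * f x - x * G x) := hWeq
        rw [this]
        exact hI1.sub hI2
      have hW0 : ∫ x, W x = 0 := by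
        have e1 : ∫ x, W x = ∫ x, (b * (f x - G x) - (x * f x - x * G x)) :=
          integral_congr_ae (.of_forall fun x => by simp only [hW]; ring)
        rw [e1, integral_sub hI1 hI2, MeasureTheory.integral_const_mul, integral_sub hfi hGi,
          integral_sub hxfi hxGi, ← hμ0, hxG1, hf_int, hG1]
        ring
      have hWnn : ∀ᵐ x : ℝ, 0 ≤ W x := by
        filter_upwards [hae_ne0] with x hx
        show 0 ≤ (b - x) * (f x - G x)
        rcases lt_or_ge x 0 with hneg | hpos'
        · rw [hfnegz x hneg, hGneg x hneg.le]
          norm_num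
        · have hxpos : 0 < x := lt_of_le_of_ne hpos' (Ne.symm hx)
          rcases lt_trichotomy x b with hlt | heq | hgt
          · have hmem := hIooS x (by rw [ha0]; exact hxpos) hlt
            have : G x < f x := by rw [hGpos x hxpos]; exact hmemS x hmem
            exact (mul_pos (by linarith) (by linarith)).le
          · rw [heq]; simp
          · have hnotS : x ∉ S := fun hmem => absurd (hbS x hmem) (not_le.2 hgt)
            have hfle : f x ≤ G x := by
              have : ¬ Real.exp (L x) < f x := fun hc => hnotS ⟨hxpos, hc⟩
              rw [hGpos x hxpos]
              linarith [not_lt.1 this]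
            nlinarith [mul_nonneg (by linarith : (0:ℝ) ≤ x - b) (by linarith : (0:ℝ) ≤ G x - f x)]
      refine hzero W hWi hWnn hW0 0 b hbpos ?_
      intro x hx1 hx2
      have hmem := hIooS x (by rw [ha0]; exact hx1) hx2
      have : G x < f x := by rw [hGpos x (hSpos x hmem)]; exact hmemS x hmem
      show 0 < (b - x) * (f x - G x)
      exact mul_pos (by linarith) (by linarith)
  -- a < b
  have hab : a < b := by
    rcases lt_or_eq_of_le (csInf_le_csSup hS_ne hSbb hSba) with h | h
    · exact h
    · exfalso
      have h' : a = b := h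
      have hSsing : S = {a} := by
        apply Subset.antisymm
        · intro s hs
          have h1 := haS s hs
          have h2 := hbS s hs
          rw [← h'] at h2
          exact le_antisymm h2 h1
        · intro s hs
          rw [mem_singleton_iff] at hs
          subst hs
          rcases hS_ne with ⟨s', hs'⟩
          have h1 := haS s' hs'
          have h2 := hbS s' hs'
          rw [← h'] at h2
          have : s' = a := le_antisymm h2 h1
          rwa [← this]
      have hae_nea : ∀ᵐ x : ℝ, x ≠ a := by
        rw [ae_iff]
        have : {x : ℝ | ¬ x ≠ a} = {a} := by ext z; simp
        rw [this]
        exact measure_singleton a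
      have hDnn : ∀ᵐ x : ℝ, 0 ≤ G x - f x := by
        filter_upwards [hae_ne0, hae_nea] with x hx hxa
        rcases lt_or_ge x 0 with hneg | hpos'
        · rw [hfnegz x hneg, hGneg x hneg.le]; norm_num
        · have hxpos : 0 < x := lt_of_le_of_ne hpos' (Ne.symm hx)
          have hnotS : x ∉ S := by
            rw [hSsing]
            simpa using hxa
          have : ¬ Real.exp (L x) < f x := fun hc => hnotS ⟨hxpos, hc⟩
          rw [hGpos x hxpos]
          linarith [not_lt.1 this]
      have hDi : Integrable (fun x => G x - f x) := hGi.sub hfi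
      have hD0 : ∫ x, G x - f x = 0 := by
        rw [integral_sub hGi hfi, hG1, hf_int]
        ring
      have hDz := (integral_eq_zero_iff_of_nonneg_ae hDnn hDi).1 hD0
      apply hrig
      filter_upwards [hDz] with x hx
      have : G x - f x = 0 := hx
      linarith
  refine ⟨a, b, hapos, hab, ?_, ?_⟩
  · -- outside [a, b]
    intro x hx hnot
    by_contra hcon
    push_neg at hcon
    have hge : Real.exp (L x) ≤ f x := by
      rw [hf]
      have hnl : ¬ expE (φ x) < Real.exp (L x) := by
        rw [expE_lt_exp_iff (hφ_top x)]
        exact not_lt.2 hcon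
      exact not_lt.1 hnl
    rw [mem_Icc, not_and_or] at hnot
    push_neg at hnot
    rcases hnot with h | h
    · -- x < a
      have hxa : x < a := not_le.1 (by intro hc; exact absurd hc (not_le.2 h))
      set v := (x + a)/2 with hv
      have hv1 : x < v := by rw [hv]; linarith
      have hv2 : v < a := by rw [hv]; linarith
      have hvs : v < s₀ := lt_of_lt_of_le hv2 (haS s₀ hs₀)
      have hmem := hS_mid x s₀ v hx hv1 hvs hge (hmemS s₀ hs₀).le (Or.inr (hmemS s₀ hs₀))
      exact absurd (haS v hmem) (not_le.2 hv2)
    · -- b < x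
      have hbx : b < x := h
      set v := (b + x)/2 with hv
      have hv1 : v < x := by rw [hv]; linarith
      have hv2 : b < v := by rw [hv]; linarith
      have hsv : s₀ < v := lt_of_le_of_lt (hbS s₀ hs₀) hv2
      have hmem := hS_mid s₀ x v (hSpos s₀ hs₀).le hsv hv1 (hmemS s₀ hs₀).le hge
        (Or.inl (hmemS s₀ hs₀))
      exact absurd (hbS v hmem) (not_le.2 hv2)
  · -- inside (a, b)
    intro x hx
    have hmem := hIooS x hx.1 hx.2
    have hlt : Real.exp (L x) < f x := hmemS x hmem
    rw [hf] at hlt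
    exact (exp_lt_expE_iff (hφ_top x)).1 hlt
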